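/- Let (X, ‖·‖) be a Banach space and T : X → X a (b,θ)-enriched contraction. With λ = 1/(b+1) and c = θ/(b+1), the Krasnoselskij iteration x_{n+1} = (1−λ)x_n + λT x_n converges to the unique fixed point p and satisfies the error estimate ‖x_{n+i−1} − p‖ ≤ (c^i/(1−c)) ‖x_n − x_{n−1}‖ for all n ≥ 1 and i ≥ 1. -/

import Mathlib

/-!
The Krasnoselskij averaging `S x = (1 - λ) x + λ T x` with `λ = 1/(b+1)` satisfies
`S x - S y = λ (b (x - y) + (T x - T y))`, so a `(b, θ)`-enriched contraction `T` makes `S` a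
Banach contraction with constant `c = θ/(b+1) < 1`, and `S` has the same fixed points as `T`.
The Krasnoselskij iteration is the Picard iteration of `S`, so convergence and the error estimate
are the Banach fixed point theorem with its a priori estimate, started at `x_{n-1}`.
-/

open Function

/-- The constraints `0 ≤ b` and `θ < b + 1` of the definition are left to separate hypotheses. -/
def IsEnrichedContraction {X : Type*} [NormedAddCommGroup X] [NormedSpace ℝ X]
    (b θ : ℝ) (T : X → X) : Prop :=
  ∀ x y, ‖b • (x - y) + (T x - T y)‖ ≤ θ * ‖x - y‖

theorem eq_iterate_of_forall_succ {α : Type*} {f : α → α} {u : ℕ → α}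
    (hu : ∀ n, u (n + 1) = f (u n)) (m i : ℕ) : u (m + i) = f^[i] (u m) := by
  induction i with
  | zero => rfl
  | succ i ih => rw [← Nat.add_assoc, hu, ih, iterate_succ_apply']

section Averaged

variable {X : Type*} [NormedAddCommGroup X] [NormedSpace ℝ X]

def averagedMap (T : X → X) (t : ℝ) (x : X) : X :=
  (1 - t) • x + t • T x

theorem averagedMap_sub_self (T : X → X) (t : ℝ) (x : X) :
    averagedMap T t x - x = t • (T x - x) := by
  simp only [averagedMap, sub_smul, one_smul, smul_sub]
  abel

theorem isFixedPt_averagedMap_iff {T : X → X} {t : ℝ} (ht : t ≠ 0) {x : X} :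
    IsFixedPt (averagedMap T t) x ↔ IsFixedPt T x := by
  rw [IsFixedPt, IsFixedPt, ← sub_eq_zero, averagedMap_sub_self, smul_eq_zero, sub_eq_zero,
    or_iff_right ht]

theorem averagedMap_sub_averagedMap (T : X → X) {b : ℝ} (hb : b + 1 ≠ 0) (x y : X) :
    averagedMap T (1 / (b + 1)) x - averagedMap T (1 / (b + 1)) y =
      (1 / (b + 1)) • (b • (x - y) + (T x - T y)) := by
  simp only [averagedMap]
  match_scalars <;> field_simp <;> ring

theorem IsEnrichedContraction.dist_averagedMap_le {b θ : ℝ} {T : X → X}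
    (hT : IsEnrichedContraction b θ T) (hb : 0 < b + 1) (x y : X) :
    dist (averagedMap T (1 / (b + 1)) x) (averagedMap T (1 / (b + 1)) y) ≤
      θ / (b + 1) * dist x y := by
  rw [dist_eq_norm, dist_eq_norm, averagedMap_sub_averagedMap T hb.ne', norm_smul,
    Real.norm_of_nonneg (by positivity)]
  calc 1 / (b + 1) * ‖b • (x - y) + (T x - T y)‖ ≤ 1 / (b + 1) * (θ * ‖x - y‖) := by
        gcongr
        exact hT x y
    _ = θ / (b + 1) * ‖x - y‖ := by ring

theorem IsEnrichedContraction.contractingWith_averagedMap {b θ : ℝ} {T : X → X}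
    (hT : IsEnrichedContraction b θ T) (hθ0 : 0 ≤ θ) (hθ : θ < b + 1) :
    ContractingWith (θ / (b + 1)).toNNReal (averagedMap T (1 / (b + 1))) := by
  have hb : 0 < b + 1 := hθ0.trans_lt hθ
  refine ⟨?_, LipschitzWith.of_dist_le' (hT.dist_averagedMap_le hb)⟩
  rw [Real.toNNReal_lt_one]
  exact (div_lt_one hb).mpr hθ

end Averaged

theorem stmt_8_general {X : Type*} [NormedAddCommGroup X] [NormedSpace ℝ X] [CompleteSpace X]
    (T : X → X) (b θ : ℝ) (hθ0 : 0 ≤ θ) (hθ : θ < b + 1)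
    (hT : ∀ x y, ‖b • (x - y) + (T x - T y)‖ ≤ θ * ‖x - y‖) :
    ∃ p : X, T p = p ∧ (∀ q, T q = q → q = p) ∧
      ∀ xs : ℕ → X,
        (∀ n : ℕ, xs (n + 1) = (1 - 1 / (b + 1)) • xs n + (1 / (b + 1)) • T (xs n)) →
        Filter.Tendsto xs Filter.atTop (nhds p) ∧
        ∀ n : ℕ, 1 ≤ n → ∀ i : ℕ, 1 ≤ i →
          ‖xs (n + i - 1) - p‖ ≤
            ((θ / (b + 1)) ^ i / (1 - θ / (b + 1))) * ‖xs n - xs (n - 1)‖ := by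
  have hS := IsEnrichedContraction.contractingWith_averagedMap hT hθ0 hθ
  have ht : 1 / (b + 1) ≠ 0 := by have := hθ0.trans_lt hθ; positivity
  set S := averagedMap T (1 / (b + 1))
  have hK : ((θ / (b + 1)).toNNReal : ℝ) = θ / (b + 1) :=
    Real.coe_toNNReal _ (div_nonneg hθ0 (hθ0.trans hθ.le))
  refine ⟨ContractingWith.fixedPoint S hS,
    (isFixedPt_averagedMap_iff ht).mp hS.fixedPoint_isFixedPt,
    fun q hq => hS.fixedPoint_unique ((isFixedPt_averagedMap_iff ht).mpr hq), fun xs hxs => ?_⟩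
  have horbit := eq_iterate_of_forall_succ (f := S) hxs
  constructor
  · simpa only [zero_add, ← horbit 0] using hS.tendsto_iterate_fixedPoint (xs 0)
  · intro n hn i _
    obtain ⟨m, rfl⟩ := Nat.exists_eq_add_of_le' hn
    have hstep : S (xs m) = xs (m + 1) := (hxs m).symm
    have hapriori := hS.apriori_dist_iterate_fixedPoint_le (xs m) i
    rw [← horbit, hstep, hK, dist_comm (xs m), dist_eq_norm, dist_eq_norm] at hapriori
    rw [Nat.add_right_comm m 1 i, Nat.add_sub_cancel, Nat.add_sub_cancel]
    convert hapriori using 1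
    ring

/-- (Berinde–Păcurar) enriched contraction on a Banach space: the
Krasnoselskij iteration with λ = 1/(b+1) converges to the unique fixed point with
the error estimate ‖x_{n+i-1} - p‖ ≤ c^i/(1-c) ‖x_n - x_{n-1}‖, c = θ/(b+1). -/
theorem stmt_8 {X : Type*} [NormedAddCommGroup X] [NormedSpace ℝ X] [CompleteSpace X]
    (T : X → X) (b θ : ℝ) (hb : 0 ≤ b) (hθ0 : 0 ≤ θ) (hθ : θ < b + 1)
    (hT : ∀ x y, ‖b • (x - y) + (T x - T y)‖ ≤ θ * ‖x - y‖) :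
    ∃ p : X, T p = p ∧ (∀ q, T q = q → q = p) ∧
      ∀ xs : ℕ → X,
        (∀ n : ℕ, xs (n + 1) = (1 - 1 / (b + 1)) • xs n + (1 / (b + 1)) • T (xs n)) →
        Filter.Tendsto xs Filter.atTop (nhds p) ∧
        ∀ n : ℕ, 1 ≤ n → ∀ i : ℕ, 1 ≤ i →
          ‖xs (n + i - 1) - p‖ ≤
            ((θ / (b + 1)) ^ i / (1 - θ / (b + 1))) * ‖xs n - xs (n - 1)‖ :=
  stmt_8_general T b θ hθ0 hθ hT
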